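/- Let α > 0 with α ∈ ℕ, z ∈ [−1, 0], and define f(x) := (x − z)₊^α · ln|x − z| (extended by 0 for x ≤ z). Then there is no polynomial P_n and ε > 0 with |f(x) − P_n(x)| ≤ (1/2)·(x − z)^α·|ln(x−z)| for all x ∈ [z, z+ε]. -/
import Mathlib


open Set Filter Polynomial Topology

private lemma aux_dvd : ∀ (n : ℕ) (Q : Polynomial ℝ),
    Tendsto (fun t => Q.eval t / t ^ n) (𝓝[>] (0:ℝ)) (𝓝 0) →
    (Polynomial.X ^ (n + 1) ∣ Q) := by
  intro n
  induction n with
  | zero =>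
    intro Q hQ
    have h1 : Tendsto (fun t => Q.eval t) (𝓝[>] (0:ℝ)) (𝓝 0) := by
      refine hQ.congr' ?_
      filter_upwards [self_mem_nhdsWithin] with t ht
      simp
    have h2 : Tendsto (fun t => Q.eval t) (𝓝[>] (0:ℝ)) (𝓝 (Q.eval 0)) :=
      (Q.continuous_aeval.tendsto 0).mono_left nhdsWithin_le_nhds
    have h0 : Q.eval 0 = 0 := tendsto_nhds_unique h2 h1
    rw [pow_one, Polynomial.X_dvd_iff, Polynomial.coeff_zero_eq_eval_zero]
    exact h0
  | succ n ih =>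
    intro Q hQ
    have h0 : Tendsto (fun t => Q.eval t / t ^ n) (𝓝[>] (0:ℝ)) (𝓝 0) := by
      have heq : (fun t => Q.eval t / t ^ n) =ᶠ[𝓝[>] (0:ℝ)]
          fun t => (Q.eval t / t ^ (n + 1)) * t := by
        filter_upwards [self_mem_nhdsWithin] with t ht
        have ht0 : t ≠ 0 := ne_of_gt ht
        field_simp
        ring
      rw [tendsto_congr' heq]
      have htend : Tendsto (fun t : ℝ => t) (𝓝[>] (0:ℝ)) (𝓝 0) :=
        tendsto_id.mono_left nhdsWithin_le_nhds
      simpa using hQ.mul htend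
    obtain ⟨Q₁, rfl⟩ := ih Q h0
    have hQ1 : Tendsto (fun t => Q₁.eval t) (𝓝[>] (0:ℝ)) (𝓝 0) := by
      have heq : (fun t => Q₁.eval t) =ᶠ[𝓝[>] (0:ℝ)]
          fun t => (Polynomial.X ^ (n + 1) * Q₁).eval t / t ^ (n + 1) := by
        filter_upwards [self_mem_nhdsWithin] with t ht
        have ht0 : (t : ℝ) ^ (n + 1) ≠ 0 := pow_ne_zero _ (ne_of_gt ht)
        simp [mul_div_assoc, mul_comm]
        field_simp
      rw [tendsto_congr' heq]
      exact hQ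
    have h2 : Tendsto (fun t => Q₁.eval t) (𝓝[>] (0:ℝ)) (𝓝 (Q₁.eval 0)) :=
      (Q₁.continuous_aeval.tendsto 0).mono_left nhdsWithin_le_nhds
    have h0' : Q₁.eval 0 = 0 := tendsto_nhds_unique h2 hQ1
    have hx : Polynomial.X ∣ Q₁ := by
      rw [Polynomial.X_dvd_iff, Polynomial.coeff_zero_eq_eval_zero]; exact h0'
    obtain ⟨Q₂, rfl⟩ := hx
    exact ⟨Q₂, by ring⟩

/-- for integer `α ≥ 1`, `z ∈ [−1,0]` and
`f(x) = (x−z)₊^α · ln|x−z|`, there is no polynomial `P` and `ε > 0` with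
`|f(x) − P(x)| ≤ (1/2)·(x−z)^α·|ln(x−z)|` for all `x ∈ [z, z+ε]`. -/
theorem stmt7 (α : ℕ) (hα : 1 ≤ α) (z : ℝ) (hz : z ∈ Icc (-1:ℝ) 0) :
    ¬ ∃ (P : Polynomial ℝ) (ε : ℝ), 0 < ε ∧
      ∀ x ∈ Icc z (z + ε),
        |(max (x - z) 0) ^ α * Real.log |x - z| - P.eval x| ≤
          (1 / 2) * (x - z) ^ α * |Real.log (x - z)| := by
  rintro ⟨P, ε, hε, H⟩
  obtain ⟨m, rfl⟩ : ∃ m, α = m + 1 := ⟨α - 1, (Nat.succ_pred_eq_of_pos hα).symm⟩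
  set h : Polynomial ℝ := -(P.comp (Polynomial.X + Polynomial.C z)) with hh
  set δ : ℝ := min ε 1 with hδdef
  have hδ : 0 < δ := lt_min hε one_pos
  -- key bounds on h
  have key : ∀ t ∈ Ioo (0:ℝ) δ,
      (1/2) * t ^ (m+1) * (-Real.log t) ≤ h.eval t ∧
      h.eval t ≤ (3/2) * t ^ (m+1) * (-Real.log t) := by
    intro t ht
    have ht0 : 0 < t := ht.1
    have ht1 : t < 1 := lt_of_lt_of_le ht.2 (min_le_right _ _)
    have htε : t ≤ ε := le_of_lt (lt_of_lt_of_le ht.2 (min_le_left _ _))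
    have hx := H (z + t) ⟨by linarith, by linarith⟩
    have e1 : z + t - z = t := by ring
    rw [e1] at hx
    have e2 : max t 0 = t := max_eq_left ht0.le
    have e3 : |t| = t := abs_of_pos ht0
    have hlog : Real.log t < 0 := Real.log_neg ht0 ht1
    have e4 : |Real.log t| = -Real.log t := abs_of_neg hlog
    rw [e2, e3, e4, abs_le] at hx
    have heval : h.eval t = -(P.eval (z + t)) := by
      simp [hh, add_comm t z]
    rw [heval]
    constructor <;> nlinarith [hx.1, hx.2]
  have hIoo : Ioo (0:ℝ) δ ∈ 𝓝[>] (0:ℝ) := Ioo_mem_nhdsGT_of_mem ⟨le_refl 0, hδ⟩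
  -- squeeze to get h.eval t / t^m → 0
  have hsq : Tendsto (fun t => h.eval t / t ^ m) (𝓝[>] (0:ℝ)) (𝓝 0) := by
    have hlim : Tendsto (fun t : ℝ => (3/2) * (t * (-Real.log t))) (𝓝[>] (0:ℝ)) (𝓝 0) := by
      have h1 := tendsto_log_mul_rpow_nhdsGT_zero (r := 1) one_pos
      simp only [Real.rpow_one] at h1
      have h2 := (h1.neg).const_mul (3/2 : ℝ)
      simp only [neg_zero, mul_zero] at h2
      refine h2.congr fun t => by ring
    refine squeeze_zero' ?_ ?_ hlim
    · filter_upwards [hIoo] with t ht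
      have ht0 : 0 < t := ht.1
      have hl := (key t ht).1
      have ht1 : t < 1 := lt_of_lt_of_le ht.2 (min_le_right _ _)
      have hlog : Real.log t < 0 := Real.log_neg ht0 ht1
      have h0 : (0:ℝ) ≤ h.eval t := le_trans (mul_nonneg (by positivity) (neg_nonneg.2 hlog.le)) hl
      exact div_nonneg h0 (pow_nonneg ht0.le m)
    · filter_upwards [hIoo] with t ht
      have ht0 : 0 < t := ht.1
      have hu := (key t ht).2
      rw [div_le_iff₀ (pow_pos ht0 m)]
      calc h.eval t ≤ (3/2) * t ^ (m+1) * (-Real.log t) := hu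
        _ = (3/2) * (t * (-Real.log t)) * t ^ m := by rw [pow_succ]; ring
  obtain ⟨S, hS⟩ := aux_dvd m h hsq
  -- lower bound transfers to S
  have hSlow : ∀ᶠ t in 𝓝[>] (0:ℝ), (1/2) * (-Real.log t) ≤ S.eval t := by
    filter_upwards [hIoo] with t ht
    have ht0 : 0 < t := ht.1
    have hl := (key t ht).1
    have heq : h.eval t = t ^ (m+1) * S.eval t := by rw [hS]; simp
    rw [heq] at hl
    have hp : (0:ℝ) < t ^ (m+1) := pow_pos ht0 _
    nlinarith [hl]
  have hatTop : Tendsto (fun t : ℝ => (1/2) * (-Real.log t)) (𝓝[>] (0:ℝ)) atTop := by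
    have h1 : Tendsto (fun t : ℝ => -Real.log t) (𝓝[>] (0:ℝ)) atTop :=
      tendsto_neg_atBot_atTop.comp Real.tendsto_log_nhdsGT_zero
    exact h1.const_mul_atTop (by norm_num : (0:ℝ) < 1/2)
  have hStop : Tendsto (fun t => S.eval t) (𝓝[>] (0:ℝ)) atTop :=
    tendsto_atTop_mono' _ hSlow hatTop
  have hSnhds : Tendsto (fun t => S.eval t) (𝓝[>] (0:ℝ)) (𝓝 (S.eval 0)) :=
    (S.continuous_aeval.tendsto 0).mono_left nhdsWithin_le_nhds
  exact not_tendsto_atTop_of_tendsto_nhds hSnhds hStop
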